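/- Let n ≥ 5 be an odd integer, let N = 6·2^{n−4}, and let F ∈ ℚ[x₁,…,x_N] be a symmetric form of degree n. Since the power sums p₁,…,p_N are algebraically independent over ℚ, F is uniquely a polynomial in p₁,…,p_N; assume the coefficient of the monomial p_n in this representation is nonzero. Then for every rational number q there exist elements f₁,…,f_N of the field of rational functions ℚ(t₁,…,t_s) in s = 2n − 6 variables such that F(f₁,…,f_N) = q identically. -/

import Mathlib

/-!
Write `F = Φ(p₁, …, p_N)`. As `F` is homogeneous of degree `n`, `Φ` may be taken isobaric of
weight `n` (`p_k` having weight `k`), and as `n` is odd every monomial of `Φ` other than `p_n`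
then contains some `p_k` with `k < n` odd. So `F(r) = c · p_n(r)`, `c ≠ 0` the coefficient of
`p_n`, at every point `r` where the odd power sums below `n` vanish; a rational such point with
`p_n(r) = q / c` is a constant solution over `ℚ(t₁, …, t_s)`.

Such points come from iterated central differences. Replacing a point `x` by the two points
`x + a` and `-(x - a)` turns an odd power sum `P(x) = x^k` into `P(x + a) - P(x - a)`. Doing this
with steps `h₁, …, h_m` from a start `γ` gives `2^m` points whose `k`-th power sum, `k` odd, is
`(Δ_{h₁} ⋯ Δ_{h_m} X^k)(γ)`: a polynomial in `γ` of degree `k - m` with leading coefficient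
`2^m k(k-1)⋯(k-m+1) h₁ ⋯ h_m`, and an odd one when `m` is even. For `m = n - 3` and the starts
`γ = 1, 1, -2` (so `Σ γ = 0`, `Σ γ³ = -6`) all odd power sums below `n` vanish, and
`p_n = -6 · 2^m · 4 ⋯ n · h₁ ⋯ h_m` takes any value by the choice of `h₁`.
-/

namespace Polynomial

variable {R : Type*} [CommRing R]

noncomputable def centralDiff (a : R) : R[X] →ₗ[R] R[X] := taylor a - taylor (-a)

lemma centralDiff_apply (a : R) (P : R[X]) : centralDiff a P = taylor a P - taylor (-a) P := rfl

lemma eval_centralDiff (a γ : R) (P : R[X]) :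
    (centralDiff a P).eval γ = P.eval (γ + a) - P.eval (γ - a) := by
  rw [centralDiff_apply, eval_sub, taylor_eval, taylor_eval, sub_eq_add_neg γ a]

lemma coeff_centralDiff {P : R[X]} {i : ℕ} (hP : P.natDegree ≤ i + 1) (a : R) :
    (centralDiff a P).coeff i = 2 * (i + 1) * a * P.coeff (i + 1) := by
  have hlin : hasseDeriv i P = C ((hasseDeriv i P).coeff 1) * X + C ((hasseDeriv i P).coeff 0) :=
    eq_X_add_C_of_natDegree_le_one ((natDegree_hasseDeriv_le P i).trans (by omega))
  have hc1 : (hasseDeriv i P).coeff 1 = (i + 1) * P.coeff (i + 1) := by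
    rw [hasseDeriv_coeff, add_comm 1 i, Nat.choose_succ_self_right]
    push_cast
    ring
  rw [centralDiff_apply, coeff_sub, taylor_coeff, taylor_coeff, hlin]
  simp only [eval_add, eval_mul, eval_C, eval_X, hc1]
  ring

lemma natDegree_centralDiff_le (a : R) (P : R[X]) :
    (centralDiff a P).natDegree ≤ P.natDegree - 1 := by
  refine natDegree_le_iff_coeff_eq_zero.mpr fun i hi => ?_
  rw [coeff_centralDiff (by omega), coeff_eq_zero_of_natDegree_lt (by omega), mul_zero]

lemma centralDiff_comp_neg_X (a : R) (P : R[X]) :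
    (centralDiff a P).comp (-X) = -centralDiff a (P.comp (-X)) := by
  simp only [centralDiff_apply, taylor_apply, sub_comp, comp_assoc, add_comp, X_comp, C_comp,
    neg_comp, map_neg]
  ring_nf

noncomputable def iteratedCentralDiff (h : List R) : R[X] →ₗ[R] R[X] := (h.map centralDiff).prod

@[simp] lemma iteratedCentralDiff_nil (P : R[X]) : iteratedCentralDiff [] P = P := rfl

@[simp] lemma iteratedCentralDiff_cons (a : R) (h : List R) (P : R[X]) :
    iteratedCentralDiff (a :: h) P = centralDiff a (iteratedCentralDiff h P) := rfl

lemma natDegree_iteratedCentralDiff_le (h : List R) (P : R[X]) :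
    (iteratedCentralDiff h P).natDegree ≤ P.natDegree - h.length := by
  induction h with
  | nil => simp
  | cons a h ih =>
    rw [iteratedCentralDiff_cons, List.length_cons]
    exact (natDegree_centralDiff_le a _).trans (by omega)

lemma coeff_iteratedCentralDiff (h : List R) {P : R[X]} {d : ℕ}
    (hP : P.natDegree ≤ d + h.length) :
    (iteratedCentralDiff h P).coeff d =
      2 ^ h.length * (d + 1).ascFactorial h.length * h.prod * P.coeff (d + h.length) := by
  induction h generalizing d with
  | nil => simp
  | cons a h ih =>
    rw [List.length_cons] at hP ⊢
    have hdeg : (iteratedCentralDiff h P).natDegree ≤ d + 1 :=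
      (natDegree_iteratedCentralDiff_le h P).trans (by omega)
    have hasc : (d + 1).ascFactorial (h.length + 1) = (d + 1) * (d + 2).ascFactorial h.length := by
      rw [Nat.ascFactorial_succ, Nat.succ_ascFactorial]
    rw [iteratedCentralDiff_cons, coeff_centralDiff hdeg, ih (by omega), List.prod_cons, hasc,
      show d + 1 + h.length = d + (h.length + 1) by omega]
    push_cast
    ring

lemma iteratedCentralDiff_comp_neg_X (h : List R) (P : R[X]) :
    (iteratedCentralDiff h P).comp (-X) =
      (-1 : R) ^ h.length • iteratedCentralDiff h (P.comp (-X)) := by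
  induction h with
  | nil => simp
  | cons a h ih =>
    rw [iteratedCentralDiff_cons, centralDiff_comp_neg_X, ih, map_smul, iteratedCentralDiff_cons,
      List.length_cons, pow_succ, mul_smul, neg_one_smul, smul_neg]

lemma coeff_comp_neg_X (P : R[X]) (i : ℕ) : (P.comp (-X)).coeff i = (-1) ^ i * P.coeff i := by
  induction P using Polynomial.induction_on' with
  | add p q hp hq => simp [add_comp, hp, hq, mul_add]
  | monomial k c =>
    rw [← C_mul_X_pow_eq_monomial, mul_comp, C_comp, pow_comp, X_comp, neg_pow, ← mul_assoc,
      ← C_1, ← C_neg, ← C_pow, ← C_mul, coeff_C_mul_X_pow, coeff_C_mul_X_pow]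
    split_ifs with hik <;> simp [hik, mul_comm]

lemma eval_one_add_eval_one_add_eval_neg_two {K : Type*} [Field K] [CharZero K] {Q : K[X]}
    (hQ : Q.comp (-X) = -Q) (hdeg : Q.natDegree ≤ 3) :
    Q.eval 1 + Q.eval 1 + Q.eval (-2) = -6 * Q.coeff 3 := by
  have heven : ∀ i, Even i → Q.coeff i = 0 := fun i hi => by
    have := congrArg (coeff · i) hQ
    simp only [coeff_comp_neg_X, hi.neg_one_pow, one_mul, coeff_neg] at this
    exact CharZero.eq_neg_self_iff.mp this
  simp only [eval_eq_sum_range' (Nat.lt_succ_of_le hdeg), Finset.sum_range_succ,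
    Finset.sum_range_zero, heven 0 Even.zero, heven 2 even_two]
  ring

end Polynomial

section CentralDiffPoints

open Polynomial

variable {R : Type*} [CommRing R]

def centralDiffPoints : List R → R → List R
  | [], γ => [γ]
  | a :: h, γ => centralDiffPoints h (γ + a) ++ (centralDiffPoints h (γ - a)).map (-·)

lemma length_centralDiffPoints (h : List R) (γ : R) :
    (centralDiffPoints h γ).length = 2 ^ h.length := by
  induction h generalizing γ with
  | nil => rfl
  | cons a h ih => simp [centralDiffPoints, ih, pow_succ, mul_two]

lemma sum_map_pow_centralDiffPoints {k : ℕ} (hk : Odd k) (h : List R) (γ : R) :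
    ((centralDiffPoints h γ).map (· ^ k)).sum = (iteratedCentralDiff h (X ^ k)).eval γ := by
  induction h generalizing γ with
  | nil => simp [centralDiffPoints]
  | cons a h ih =>
    have hneg (l : List R) : ((l.map (-·)).map (· ^ k)).sum = -(l.map (· ^ k)).sum := by
      rw [List.sum_neg, List.map_map, List.map_map]
      simp [Function.comp_def, hk.neg_pow]
    rw [centralDiffPoints, List.map_append, List.sum_append, hneg, ih, ih,
      iteratedCentralDiff_cons, eval_centralDiff]
    exact (sub_eq_add_neg _ _).symm

lemma sum_map_pow_centralDiffPoints_one_one_neg_two {K : Type*} [Field K] [CharZero K]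
    {h : List K} (hh : Even h.length) {k : ℕ} (hk : Odd k) (hkh : k ≤ h.length + 3) :
    ((centralDiffPoints h 1 ++ centralDiffPoints h 1 ++ centralDiffPoints h (-2)).map
      (· ^ k)).sum = -6 * (iteratedCentralDiff h (X ^ k)).coeff 3 := by
  have hodd : (iteratedCentralDiff h (X ^ k)).comp (-X) = -iteratedCentralDiff h (X ^ k) := by
    rw [iteratedCentralDiff_comp_neg_X, X_pow_comp, neg_pow (X : K[X]), hk.neg_one_pow, neg_one_mul,
      map_neg, hh.neg_one_pow, one_smul]
  have hdeg : (iteratedCentralDiff h (X ^ k)).natDegree ≤ 3 :=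
    (natDegree_iteratedCentralDiff_le _ _).trans (by rw [natDegree_X_pow]; omega)
  simp only [List.map_append, List.sum_append, sum_map_pow_centralDiffPoints hk]
  exact eval_one_add_eval_one_add_eval_neg_two hodd hdeg

theorem exists_sum_odd_pow_eq_zero_and_sum_pow_eq {K : Type*} [Field K] [CharZero K] {n : ℕ} (hn : Odd n)
    (h5 : 5 ≤ n) (v : K) :
    ∃ r : Fin (3 * 2 ^ (n - 3)) → K,
      (∀ k, Odd k → k < n → ∑ i, r i ^ k = 0) ∧ ∑ i, r i ^ n = v := by
  obtain ⟨m, rfl⟩ : ∃ m, n = m + 3 := ⟨n - 3, by omega⟩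
  have hm : Even m := by obtain ⟨k, hk⟩ := hn; exact ⟨k - 1, by omega⟩
  rw [Nat.add_sub_cancel]
  set c : K := -6 * 2 ^ m * (4 : ℕ).ascFactorial m
  have hc : c ≠ 0 := by simp [c, (Nat.ascFactorial_pos 3 m).ne']
  set h : List K := v / c :: List.replicate (m - 1) 1
  have hlen : h.length = m := by simp [h]; omega
  set L := centralDiffPoints h 1 ++ centralDiffPoints h 1 ++ centralDiffPoints h (-2)
  have hL : L.length = 3 * 2 ^ m := by simp [L, length_centralDiffPoints, hlen]; ring
  obtain ⟨r, hr⟩ : ∃ r : Fin (3 * 2 ^ m) → K, ∀ k, ∑ i, r i ^ k = (L.map (· ^ k)).sum := by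
    rw [← hL]
    exact ⟨fun i => L[i], fun k => Fin.sum_univ_fun_getElem L _⟩
  refine ⟨r, fun k hk hkm => ?_, ?_⟩
  · rw [hr, sum_map_pow_centralDiffPoints_one_one_neg_two (h := h) (hlen ▸ hm) hk (by omega),
      coeff_eq_zero_of_natDegree_lt, mul_zero]
    calc _ ≤ (X ^ k : K[X]).natDegree - h.length := natDegree_iteratedCentralDiff_le _ _
      _ < 3 := by rw [natDegree_X_pow]; omega
  · rw [hr, sum_map_pow_centralDiffPoints_one_one_neg_two (h := h) (hlen ▸ hm) hn (by omega),
      coeff_iteratedCentralDiff h (by rw [natDegree_X_pow]; omega), hlen, add_comm 3 m,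
      coeff_X_pow_self]
    simp only [h, List.prod_cons, List.prod_replicate, one_pow, mul_one]
    field_simp
    ring

end CentralDiffPoints

namespace Finsupp

variable {σ : Type*} {w : σ → ℕ}

lemma exists_ne_zero_odd_of_odd_weight {d : σ →₀ ℕ} (hd : Odd (weight w d)) :
    ∃ i, d i ≠ 0 ∧ Odd (w i) := by
  by_contra! h
  rw [weight_apply, Finsupp.sum] at hd
  exact Nat.not_even_iff_odd.mpr hd <| Finset.even_sum _ fun i hi =>
    (Nat.not_odd_iff_even.mp (h i (mem_support_iff.mp hi))).nsmul_right (d i)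

lemma eq_single_one_of_weight_eq (hw : ∀ i, w i ≠ 0) {d : σ →₀ ℕ} {j : σ}
    (hd : weight w d = w j) (hj : d j ≠ 0) : d = single j 1 := by
  obtain ⟨e, rfl⟩ := le_iff_exists_add.mp (single_le_iff.mpr (Nat.one_le_iff_ne_zero.mpr hj))
  have := nonTorsionWeight_of ℕ (w := w) hw
  rw [map_add, weight_single, one_smul, add_eq_left, weight_eq_zero_iff_eq_zero] at hd
  rw [hd, add_zero]

end Finsupp

namespace MvPolynomial

variable {σ R : Type*} [CommSemiring R] {w : σ → ℕ}

theorem IsWeightedHomogeneous.eval_eq_coeff_single_one_mul (hw : ∀ i, w i ≠ 0)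
    {Φ : MvPolynomial σ R} {j : σ} (hΦ : Φ.IsWeightedHomogeneous w (w j)) (hj : Odd (w j))
    {S : σ → R} (hS : ∀ i ≠ j, Odd (w i) → w i ≤ w j → S i = 0) :
    eval S Φ = coeff (Finsupp.single j 1) Φ * S j := by
  classical
  rw [eval_eq, Finset.sum_eq_single (Finsupp.single j 1)]
  · simp
  · intro d hd hdj
    have hdw : Finsupp.weight w d = w j := hΦ (mem_support_iff.mp hd)
    obtain ⟨i, hi0, hi⟩ := Finsupp.exists_ne_zero_odd_of_odd_weight (hdw ▸ hj)
    have hij : i ≠ j := fun hij => hdj (Finsupp.eq_single_one_of_weight_eq hw hdw (hij ▸ hi0))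
    have hSi : S i = 0 := hS i hij hi (hdw ▸ Finsupp.le_weight_of_ne_zero' w hi0)
    refine mul_eq_zero_of_right _ (Finset.prod_eq_zero (Finsupp.mem_support_iff.mpr hi0) ?_)
    rw [hSi, zero_pow hi0]
  · intro h
    rw [notMem_support_iff.mp h, zero_mul]

section Homogeneous

variable {σ ι R : Type*} [CommSemiring R]

lemma isHomogeneous_psum [Fintype σ] (k : ℕ) : (psum σ R k).IsHomogeneous k :=
  IsHomogeneous.sum _ _ _ fun i _ => isHomogeneous_X_pow i k

lemma homogeneousComponent_aeval {g : ι → MvPolynomial σ R} {w : ι → ℕ}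
    (hg : ∀ i, (g i).IsHomogeneous (w i)) (d : ℕ) (Φ : MvPolynomial ι R) :
    homogeneousComponent d (aeval g Φ) = aeval g (weightedHomogeneousComponent w d Φ) := by
  classical
  induction Φ using MvPolynomial.induction_on' with
  | monomial s c =>
    have hs : (aeval g (monomial s c)).IsHomogeneous (Finsupp.weight w s) := by
      rw [aeval_monomial, Finsupp.weight_apply, Finsupp.sum, ← zero_add (Finset.sum _ _)]
      exact (isHomogeneous_C σ c).mul
        (IsHomogeneous.prod _ _ _ fun i _ => by simpa [mul_comm] using (hg i).pow (s i))
    rw [homogeneousComponent_of_mem hs,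
      weightedHomogeneousComponent_of_mem (isWeightedHomogeneous_monomial w s c rfl)]
    split_ifs <;> simp
  | add p q hp hq => simp only [map_add, hp, hq]

end Homogeneous

section PowerSums

variable {σ : Type*} [Fintype σ]

section CommSemiring

variable {K : Type*} [CommSemiring K]

variable (σ K) in
noncomputable def psumAlgHom (N : ℕ) : MvPolynomial (Fin N) K →ₐ[K] MvPolynomial σ K :=
  aeval fun i => psum σ K (i + 1)

theorem IsWeightedHomogeneous.aeval_psumAlgHom {N n : ℕ} {Φ : MvPolynomial (Fin N) K}
    (hΦ : Φ.IsWeightedHomogeneous (fun i : Fin N => (i : ℕ) + 1) n) (hn : Odd n) {j : Fin N}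
    (hj : (j : ℕ) + 1 = n) {r : σ → K} (hr : ∀ k, Odd k → k < n → ∑ i, r i ^ k = 0) :
    aeval r (psumAlgHom σ K N Φ) = coeff (Finsupp.single j 1) Φ * ∑ i, r i ^ n := by
  have hpsum (k : ℕ) : aeval r (psum σ K k) = ∑ i, r i ^ k := by simp [psum]
  rw [psumAlgHom, ← bind₁, aeval_bind₁, aeval_eq_eval]
  subst hj
  rw [hΦ.eval_eq_coeff_single_one_mul (fun _ => Nat.succ_ne_zero _) hn, hpsum]
  intro i hij hi hle
  rw [hpsum]
  exact hr _ hi (by have := Fin.val_ne_iff.mpr hij; omega)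

end CommSemiring

variable {K : Type*} [Field K] [CharZero K]

lemma esymm_mem_range_psumAlgHom {N k : ℕ} (hk : k ≤ N) :
    esymm σ K k ∈ (psumAlgHom σ K N).range := by
  induction k using Nat.strong_induction_on with
  | _ k ih =>
  set T := (psumAlgHom σ K N).range
  rcases k.eq_zero_or_pos with rfl | hk0
  · simp [esymm_zero, one_mem T]
  have hpsum (l : ℕ) (hl : 0 < l) (hlN : l ≤ N) : psum σ K l ∈ T :=
    ⟨X ⟨l - 1, by omega⟩, by simp [psumAlgHom, Nat.sub_add_cancel hl]⟩
  have hmul : (k : MvPolynomial σ K) * esymm σ K k ∈ T := by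
    rw [mul_esymm_eq_sum]
    refine mul_mem (pow_mem (neg_mem (one_mem T)) _) (sum_mem fun a ha => ?_)
    rw [Finset.mem_filter, Finset.HasAntidiagonal.mem_antidiagonal] at ha
    exact mul_mem (mul_mem (pow_mem (neg_mem (one_mem T)) _) (ih a.1 ha.2 (by omega)))
      (hpsum a.2 (by omega) (by omega))
  have hkK : (k : K) ≠ 0 := Nat.cast_ne_zero.mpr hk0.ne'
  simpa [← nsmul_eq_mul, ← Nat.cast_smul_eq_nsmul K, inv_smul_smul₀ hkK] using
    T.smul_mem hmul (k : K)⁻¹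

theorem IsSymmetric.exists_psumAlgHom_eq {N : ℕ} (hN : Fintype.card σ ≤ N)
    {F : MvPolynomial σ K} (hF : F.IsSymmetric) :
    ∃ Φ : MvPolynomial (Fin N) K, psumAlgHom σ K N Φ = F := by
  obtain ⟨Ψ, hΨ⟩ := esymmAlgHom_surjective K hN ⟨F, hF⟩
  have hle : (aeval fun i : Fin N => esymm σ K (i + 1)).range ≤
      (psumAlgHom σ K N).range := by
    rw [aeval_range]
    exact Algebra.adjoin_le (Set.range_subset_iff.mpr fun i => esymm_mem_range_psumAlgHom i.2)
  exact hle ⟨Ψ, (esymmAlgHom_apply Ψ).symm.trans (congrArg Subtype.val hΨ)⟩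

theorem IsSymmetric.exists_isWeightedHomogeneous_psumAlgHom_eq {N n : ℕ}
    (hN : Fintype.card σ ≤ N) {F : MvPolynomial σ K} (hF : F.IsSymmetric)
    (hFn : F.IsHomogeneous n) :
    ∃ Φ : MvPolynomial (Fin N) K, Φ.IsWeightedHomogeneous (fun i : Fin N => (i : ℕ) + 1) n ∧
      psumAlgHom σ K N Φ = F := by
  obtain ⟨Φ, hΦ⟩ := hF.exists_psumAlgHom_eq hN
  refine ⟨_, weightedHomogeneousComponent_isWeightedHomogeneous n Φ, ?_⟩
  calc psumAlgHom σ K N (weightedHomogeneousComponent _ n Φ)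
      = homogeneousComponent n (psumAlgHom σ K N Φ) :=
        (homogeneousComponent_aeval (fun i => isHomogeneous_psum _) n Φ).symm
    _ = F := by rw [hΦ, homogeneousComponent_eq_self hFn]

end PowerSums

end MvPolynomial

open MvPolynomial

/-- Waring-type result: let `n ≥ 5` be odd, `N = 6·2^{n−4}`, and let `F` be a symmetric form
of degree `n` in `N` variables whose (unique) representation as a polynomial in the power sums
`p₁, …, p_N` has nonzero coefficient at the monomial `p_n`.  Then for every rational `q` the
equation `F = q` has a solution in the rational function field `ℚ(t₁, …, t_{2n−6})`. -/
theorem symmetric_odd_form_waring_type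
    (n : ℕ) (hn : 5 ≤ n) (hodd : Odd n)
    (N : ℕ) (hN : N = 6 * 2 ^ (n - 4))
    (F : MvPolynomial (Fin N) ℚ)
    (hsym : F.IsSymmetric) (hhom : F.IsHomogeneous n)
    (hcoeff : ∀ Φ : MvPolynomial (Fin N) ℚ,
      aeval (fun k : Fin N => ∑ i : Fin N, X i ^ ((k : ℕ) + 1)) Φ = F →
      ∀ j : Fin N, (j : ℕ) + 1 = n → MvPolynomial.coeff (Finsupp.single j 1) Φ ≠ 0)
    (q : ℚ) :
    ∃ f : Fin N → FractionRing (MvPolynomial (Fin (2 * n - 6)) ℚ),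
      aeval f F = algebraMap ℚ (FractionRing (MvPolynomial (Fin (2 * n - 6)) ℚ)) q := by
  have hN' : N = 3 * 2 ^ (n - 3) := by rw [hN, show n - 3 = n - 4 + 1 by omega, pow_succ]; ring
  have hj : n - 1 < N := by have := Nat.lt_two_pow_self (n := n - 3); omega
  obtain ⟨Φ, hΦw, hΦ⟩ :=
    hsym.exists_isWeightedHomogeneous_psumAlgHom_eq (Fintype.card_fin N).le hhom
  have hwj : ((⟨n - 1, hj⟩ : Fin N) : ℕ) + 1 = n := by simp only; omega
  have hc := hcoeff Φ hΦ _ hwj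
  subst hN'
  obtain ⟨r, hr_lt, hr_eq⟩ :=
    exists_sum_odd_pow_eq_zero_and_sum_pow_eq hodd hn (q / coeff (Finsupp.single _ 1) Φ)
  refine ⟨algebraMap ℚ _ ∘ r, ?_⟩
  rw [aeval_algebraMap_apply, ← hΦ, hΦw.aeval_psumAlgHom hodd hwj hr_lt, hr_eq,
    mul_div_cancel₀ q hc]
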